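/- Let Π_r, Π_c be n×K matrices of rank K and let B_1,…,B_L be K×K matrices with λ_K(Σ_l B_l B_l') > 0 (smallest eigenvalue of the positive semidefinite matrix Σ_l B_l B_l'). With Ω_l = ρ Π_r B_l Π_c' and S̃_r = Σ_l Ω_l Ω_l', the K-th largest eigenvalue (in absolute value) of S̃_r satisfies |λ_K(S̃_r)| ≥ ρ² · λ_K(Π_r'Π_r) · λ_K(Π_c'Π_c) · λ_K(Σ_{l=1}^L B_l B_l'). -/

import Mathlib

open Matrix

/-- The k-th largest eigenvalue (eigenvalues sorted decreasingly, 1-indexed)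
of a Hermitian real matrix. -/
noncomputable def kthEig {n : ℕ} (A : Matrix (Fin n) (Fin n) ℝ)
    (hA : A.IsHermitian) (k : ℕ) : ℝ :=
  (List.insertionSort (· ≥ ·) (List.ofFn hA.eigenvalues)).getD (k - 1) 0

open Matrix

set_option linter.unnecessarySimpa false

lemma mulVec_dot {a b : ℕ} (M : Matrix (Fin a) (Fin b) ℝ) (u : Fin b → ℝ) (v : Fin a → ℝ) :
    (M *ᵥ u) ⬝ᵥ v = u ⬝ᵥ (Mᵀ *ᵥ v) := by
  simp only [dotProduct, mulVec, dotProduct, transpose_apply, Finset.sum_mul, Finset.mul_sum]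
  rw [Finset.sum_comm]
  congr 1; ext i; congr 1; ext j; ring

section helpers
variable {m : ℕ} (A : Matrix (Fin m) (Fin m) ℝ) (hA : A.IsHermitian)

noncomputable def Uh : Matrix (Fin m) (Fin m) ℝ := (hA.eigenvectorUnitary : Matrix (Fin m) (Fin m) ℝ)

lemma Uh_star_mul : star (Uh A hA) * (Uh A hA) = 1 := by
  simpa [Uh] using (Matrix.mem_unitaryGroup_iff'.mp (hA.eigenvectorUnitary).2)

lemma Uh_mul_star : (Uh A hA) * star (Uh A hA) = 1 := by
  simpa [Uh] using (Matrix.mem_unitaryGroup_iff.mp (hA.eigenvectorUnitary).2)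

lemma spec_decomp : A = Uh A hA * diagonal hA.eigenvalues * star (Uh A hA) := by
  have := hA.spectral_theorem
  simpa [Uh] using this

lemma star_Uh_transpose : (star (Uh A hA))ᵀ = Uh A hA := by
  rw [Matrix.star_eq_conjTranspose, conjTranspose_eq_transpose_of_trivial, transpose_transpose]

/-- w-coordinates preserve the dot product. -/
lemma w_dot_w (x : Fin m → ℝ) :
    (star (Uh A hA) *ᵥ x) ⬝ᵥ (star (Uh A hA) *ᵥ x) = x ⬝ᵥ x := by
  rw [mulVec_dot, star_Uh_transpose, mulVec_mulVec, Uh_mul_star, one_mulVec]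

/-- w-coordinates of `A *ᵥ x`. -/
lemma w_mulVec' (x : Fin m → ℝ) :
    (star (Uh A hA) *ᵥ (A *ᵥ x)) = diagonal hA.eigenvalues *ᵥ (star (Uh A hA) *ᵥ x) := by
  rw [mulVec_mulVec, mulVec_mulVec]
  have key : star (Uh A hA) * A = diagonal hA.eigenvalues * star (Uh A hA) := by
    calc star (Uh A hA) * A
        = star (Uh A hA) * (Uh A hA * diagonal hA.eigenvalues * star (Uh A hA)) := by
          rw [← spec_decomp A hA]
      _ = diagonal hA.eigenvalues * star (Uh A hA) := by
          rw [← Matrix.mul_assoc, ← Matrix.mul_assoc, Uh_star_mul, Matrix.one_mul]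
  rw [key]

lemma w_mulVec (x : Fin m → ℝ) (i : Fin m) :
    (star (Uh A hA) *ᵥ (A *ᵥ x)) i
      = hA.eigenvalues i * (star (Uh A hA) *ᵥ x) i := by
  rw [w_mulVec', mulVec_diagonal]

/-- quadratic form in w-coordinates. -/
lemma quad_eq_sum (x : Fin m → ℝ) :
    x ⬝ᵥ (A *ᵥ x) = ∑ i, hA.eigenvalues i * ((star (Uh A hA) *ᵥ x) i)^2 := by
  have h1 : x ⬝ᵥ (A *ᵥ x) = (star (Uh A hA) *ᵥ x) ⬝ᵥ (star (Uh A hA) *ᵥ (A *ᵥ x)) := by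
    rw [mulVec_dot, star_Uh_transpose, mulVec_mulVec, mulVec_mulVec, Uh_mul_star,
      Matrix.one_mul]
  rw [h1, dotProduct]
  refine Finset.sum_congr rfl fun i _ => ?_
  rw [w_mulVec]; ring

/-- lower bound on quadratic form by a lower bound on eigenvalues. -/
lemma quad_ge (c : ℝ) (hc : ∀ i, c ≤ hA.eigenvalues i) (x : Fin m → ℝ) :
    c * (x ⬝ᵥ x) ≤ x ⬝ᵥ (A *ᵥ x) := by
  rw [quad_eq_sum A hA, ← w_dot_w A hA x, dotProduct, Finset.mul_sum]
  refine Finset.sum_le_sum fun i _ => ?_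
  have := sq_nonneg ((star (Uh A hA) *ᵥ x) i)
  have := hc i
  nlinarith

/-- ‖A x‖² ≥ c * (x ⬝ A x) for PSD-dominated c. -/
lemma normsq_mulVec_ge (c : ℝ) (hc : ∀ i, c ≤ hA.eigenvalues i)
    (hpsd : ∀ i, 0 ≤ hA.eigenvalues i) (x : Fin m → ℝ) :
    c * (x ⬝ᵥ (A *ᵥ x)) ≤ (A *ᵥ x) ⬝ᵥ (A *ᵥ x) := by
  rw [quad_eq_sum A hA, ← w_dot_w A hA (A *ᵥ x), dotProduct, Finset.mul_sum]
  refine Finset.sum_le_sum fun i _ => ?_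
  rw [w_mulVec]
  have h1 := sq_nonneg ((star (Uh A hA) *ᵥ x) i)
  have h2 := hc i
  have h3 := hpsd i
  nlinarith [mul_le_mul_of_nonneg_right (mul_le_mul_of_nonneg_right h2 h3) h1]

/-- strict upper bound when w vanishes on large eigenvalues. -/
lemma quad_lt (c : ℝ) (x : Fin m → ℝ) (hx : x ⬝ᵥ x ≠ 0)
    (hw : ∀ i, c ≤ hA.eigenvalues i → (star (Uh A hA) *ᵥ x) i = 0) :
    x ⬝ᵥ (A *ᵥ x) < c * (x ⬝ᵥ x) := by
  rw [quad_eq_sum A hA, ← w_dot_w A hA x, dotProduct, Finset.mul_sum]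
  have hwne : ∃ i, (star (Uh A hA) *ᵥ x) i ≠ 0 := by
    by_contra h
    push_neg at h
    apply hx
    rw [← w_dot_w A hA x, dotProduct]
    exact Finset.sum_eq_zero fun i _ => by rw [h i]; ring
  obtain ⟨i₀, hi₀⟩ := hwne
  refine Finset.sum_lt_sum (fun i _ => ?_) ⟨i₀, Finset.mem_univ _, ?_⟩
  · by_cases h : c ≤ hA.eigenvalues i
    · rw [hw i h]; ring_nf; exact le_refl _
    · push_neg at h
      nlinarith [sq_nonneg ((star (Uh A hA) *ᵥ x) i)]
  · have hlt : hA.eigenvalues i₀ < c := by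
      by_contra h
      push_neg at h
      exact hi₀ (hw i₀ h)
    have h2 : 0 < ((star (Uh A hA) *ᵥ x) i₀)^2 := by positivity
    nlinarith

end helpers
open Matrix


section kth
variable {m : ℕ} (A : Matrix (Fin m) (Fin m) ℝ) (hA : A.IsHermitian)

lemma sorted_len : (List.insertionSort (· ≥ ·) (List.ofFn hA.eigenvalues)).length = m := by
  rw [List.length_insertionSort, List.length_ofFn]

lemma sorted_sorted : (List.insertionSort (· ≥ ·) (List.ofFn hA.eigenvalues)).Pairwise (· ≥ ·) :=
  List.pairwise_insertionSort _ _

lemma sorted_anti {i j : ℕ} (hij : i ≤ j)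
    (hj : j < (List.insertionSort (· ≥ ·) (List.ofFn hA.eigenvalues)).length) :
    (List.insertionSort (· ≥ ·) (List.ofFn hA.eigenvalues))[j]
      ≤ (List.insertionSort (· ≥ ·) (List.ofFn hA.eigenvalues))[i]'(lt_of_le_of_lt hij hj) := by
  rcases eq_or_lt_of_le hij with h | h
  · subst h; exact le_refl _
  · have := (sorted_sorted A hA).rel_get_of_lt
      (a := ⟨i, lt_of_le_of_lt hij hj⟩) (b := ⟨j, hj⟩) (by simpa [Fin.lt_def] using h)
    simpa [List.get_eq_getElem] using this

lemma kthEig_eq_get {k : ℕ} (h1 : 1 ≤ k) (h2 : k ≤ m) :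
    kthEig A hA k = (List.insertionSort (· ≥ ·) (List.ofFn hA.eigenvalues))[k - 1]'
      (by rw [sorted_len]; omega) := by
  rw [kthEig, List.getD_eq_getElem _ _ (by rw [sorted_len A hA]; omega)]

lemma kthEig_mem {k : ℕ} (h1 : 1 ≤ k) (h2 : k ≤ m) :
    ∃ i, kthEig A hA k = hA.eigenvalues i := by
  have hmem : kthEig A hA k ∈ List.ofFn hA.eigenvalues := by
    rw [kthEig_eq_get A hA h1 h2]
    exact (List.perm_insertionSort (· ≥ ·) _).mem_iff.mp (List.getElem_mem _)
  obtain ⟨i, hi⟩ := List.mem_ofFn.mp hmem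
  exact ⟨i, hi.symm⟩

lemma kthEig_le (hm : 0 < m) (i : Fin m) : kthEig A hA m ≤ hA.eigenvalues i := by
  have hmem : hA.eigenvalues i ∈ List.insertionSort (· ≥ ·) (List.ofFn hA.eigenvalues) :=
    (List.perm_insertionSort (· ≥ ·) _).mem_iff.mpr (List.mem_ofFn.mpr ⟨i, rfl⟩)
  obtain ⟨j, hjlt, hj⟩ := List.mem_iff_getElem.mp hmem
  rw [kthEig_eq_get A hA hm (le_refl m), ← hj]
  have hlen := sorted_len A hA
  exact sorted_anti A hA (i := j) (j := m - 1) (by omega) (by omega)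

/-- If the k-th eigenvalue is < c then at most k-1 eigenvalues are ≥ c. -/
lemma kthEig_count {k : ℕ} (h1 : 1 ≤ k) (h2 : k ≤ m) {c : ℝ}
    (hlt : kthEig A hA k < c) :
    Fintype.card {i : Fin m // c ≤ hA.eigenvalues i} ≤ k - 1 := by
  classical
  set s := List.insertionSort (· ≥ ·) (List.ofFn hA.eigenvalues) with hs
  have hlen : s.length = m := sorted_len A hA
  have hcount : (List.ofFn hA.eigenvalues).countP (fun x => decide (c ≤ x))
      = s.countP (fun x => decide (c ≤ x)) :=
    ((List.perm_insertionSort _ _).countP_eq _).symm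
  have hdrop : ∀ y ∈ s.drop (k-1), y < c := by
    intro y hy
    obtain ⟨j, hjlt, hj⟩ := List.mem_iff_getElem.mp hy
    have hjl : (k-1) + j < s.length := by
      have : (s.drop (k-1)).length = s.length - (k-1) := by simp
      omega
    have hyget : y = s[(k-1) + j]'hjl := by rw [← hj, List.getElem_drop']
    have hle : s[(k-1) + j]'hjl ≤ s[k-1]'(by omega) :=
      sorted_anti A hA (by omega) hjl
    have hk : s[k-1]'(by omega) = kthEig A hA k := (kthEig_eq_get A hA h1 h2).symm
    rw [hyget]
    exact lt_of_le_of_lt (hk ▸ hle) hlt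
  have hcd : (s.drop (k-1)).countP (fun x => decide (c ≤ x)) = 0 := by
    rw [List.countP_eq_zero]
    intro a ha
    simpa using not_le.mpr (hdrop a ha)
  have hsplit : s.countP (fun x => decide (c ≤ x)) ≤ k - 1 := by
    conv_lhs => rw [← List.take_append_drop (k-1) s]
    rw [List.countP_append, hcd]
    have h3 := List.countP_le_length (l := s.take (k-1)) (p := fun x => decide (c ≤ x))
    have h4 : (s.take (k-1)).length ≤ k-1 := by simp
    omega
  have hcard : Fintype.card {i : Fin m // c ≤ hA.eigenvalues i}
      = (List.ofFn hA.eigenvalues).countP (fun x => decide (c ≤ x)) := by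
    rw [Fintype.card_subtype, List.ofFn_eq_map, List.countP_map,
      List.countP_eq_length_filter]
    simp [Fin.univ_def, Finset.filter, Finset.card, Function.comp_def]
  omega

end kth
open Matrix
lemma sum_mulVec' {a L : ℕ} (M : Fin L → Matrix (Fin a) (Fin a) ℝ) (v : Fin a → ℝ) :
    (∑ l, M l) *ᵥ v = ∑ l, M l *ᵥ v := by
  ext i
  simp [mulVec, dotProduct, Finset.sum_apply, Matrix.sum_apply, Finset.sum_mul]
  rw [Finset.sum_comm]
lemma dot_sum' {a L : ℕ} (u : Fin a → ℝ) (f : Fin L → (Fin a → ℝ)) :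
    u ⬝ᵥ (∑ l, f l) = ∑ l, u ⬝ᵥ f l := by
  simp [dotProduct, Finset.sum_apply, Finset.mul_sum]
  rw [Finset.sum_comm]
/-- With Ω_l = ρ Π_r B_l Π_c' and S̃_r = ∑_l Ω_l Ω_l', if Π_r, Π_c
have rank K and λ_K(∑_l B_l B_l') > 0, then
|λ_K(S̃_r)| ≥ ρ² λ_K(Π_r'Π_r) λ_K(Π_c'Π_c) λ_K(∑_l B_l B_l'). -/
theorem kth_eigenvalue_lower_bound {n K L : ℕ}
    (Pr Pc : Matrix (Fin n) (Fin K) ℝ) (ρ : ℝ) (hρ0 : 0 < ρ) (hρ1 : ρ ≤ 1)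
    (B : Fin L → Matrix (Fin K) (Fin K) ℝ)
    (hPr : Pr.rank = K) (hPc : Pc.rank = K)
    (hSB : (∑ l, B l * (B l)ᵀ).IsHermitian)
    (hBpos : 0 < kthEig (∑ l, B l * (B l)ᵀ) hSB K)
    (hS : (∑ l, (ρ • (Pr * B l * Pcᵀ)) * (ρ • (Pr * B l * Pcᵀ))ᵀ).IsHermitian)
    (hGr : (Prᵀ * Pr).IsHermitian) (hGc : (Pcᵀ * Pc).IsHermitian) :
    ρ ^ 2 * kthEig (Prᵀ * Pr) hGr K * kthEig (Pcᵀ * Pc) hGc K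
        * kthEig (∑ l, B l * (B l)ᵀ) hSB K
      ≤ |kthEig (∑ l, (ρ • (Pr * B l * Pcᵀ)) * (ρ • (Pr * B l * Pcᵀ))ᵀ) hS K| := by
  classical
  set S : Matrix (Fin n) (Fin n) ℝ :=
      ∑ l, (ρ • (Pr * B l * Pcᵀ)) * (ρ • (Pr * B l * Pcᵀ))ᵀ with hSdef
  -- Basic size facts
  have hK1 : 1 ≤ K := by
    by_contra h
    push_neg at h
    have hK0 : K = 0 := by omega
    subst hK0
    revert hBpos
    simp [kthEig]
  have hKn : K ≤ n := by
    have h := Matrix.rank_le_card_height Pr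
    rw [hPr] at h
    simpa using h
  -- Positive semidefiniteness of the Gram matrices
  have hGrPSD : (Prᵀ * Pr).PosSemidef := by
    refine .of_dotProduct_mulVec_nonneg hGr fun x => ?_
    have hstar : star x = x := by simp
    rw [hstar, ← mulVec_mulVec, ← mulVec_dot]
    exact Finset.sum_nonneg fun i _ => mul_self_nonneg _
  have hGcPSD : (Pcᵀ * Pc).PosSemidef := by
    refine .of_dotProduct_mulVec_nonneg hGc fun x => ?_
    have hstar : star x = x := by simp
    rw [hstar, ← mulVec_mulVec, ← mulVec_dot]
    exact Finset.sum_nonneg fun i _ => mul_self_nonneg _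
  -- eigenvalue lower bounds
  have hlr_le : ∀ i, kthEig (Prᵀ * Pr) hGr K ≤ hGr.eigenvalues i :=
    fun i => kthEig_le (Prᵀ * Pr) hGr (by omega) i
  have hlc_le : ∀ i, kthEig (Pcᵀ * Pc) hGc K ≤ hGc.eigenvalues i :=
    fun i => kthEig_le (Pcᵀ * Pc) hGc (by omega) i
  have hlB_le : ∀ i, kthEig (∑ l, B l * (B l)ᵀ) hSB K ≤ hSB.eigenvalues i :=
    fun i => kthEig_le _ hSB (by omega) i
  have hGr_nonneg : ∀ i, 0 ≤ hGr.eigenvalues i := fun i => hGrPSD.eigenvalues_nonneg i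
  have hlc0 : 0 ≤ kthEig (Pcᵀ * Pc) hGc K := by
    obtain ⟨i, hi⟩ := kthEig_mem (Pcᵀ * Pc) hGc hK1 le_rfl
    rw [hi]
    exact hGcPSD.eigenvalues_nonneg i
  have hlB0 : 0 ≤ kthEig (∑ l, B l * (B l)ᵀ) hSB K := le_of_lt hBpos
  set c : ℝ := ρ ^ 2 * kthEig (Prᵀ * Pr) hGr K * kthEig (Pcᵀ * Pc) hGc K
      * kthEig (∑ l, B l * (B l)ᵀ) hSB K with hc
  suffices hmain : c ≤ kthEig (∑ l, (ρ • (Pr * B l * Pcᵀ)) * (ρ • (Pr * B l * Pcᵀ))ᵀ) hS K by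
    exact hmain.trans (le_abs_self _)
  by_contra hcon
  push_neg at hcon
  -- at most K-1 eigenvalues of S are ≥ c
  have hJ : Fintype.card {i : Fin n // c ≤ hS.eigenvalues i} ≤ K - 1 :=
    kthEig_count _ hS hK1 hKn hcon
  let T : (Fin n → ℝ) →ₗ[ℝ] ({i : Fin n // c ≤ hS.eigenvalues i} → ℝ) :=
    LinearMap.pi fun j => (LinearMap.proj (j.1 : Fin n)).comp (mulVecLin (star (Uh S hS)))
  have hrank : Module.finrank ℝ (LinearMap.range T)
      + Module.finrank ℝ (LinearMap.ker T) = n := by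
    rw [LinearMap.finrank_range_add_finrank_ker]
    simp [Module.finrank_fintype_fun_eq_card]
  have hrangeT : Module.finrank ℝ (LinearMap.range T) ≤ K - 1 := by
    refine le_trans (Submodule.finrank_le _) ?_
    simpa [Module.finrank_fintype_fun_eq_card] using hJ
  have hR : Module.finrank ℝ (LinearMap.range (mulVecLin Pr)) = K := by
    simpa [Matrix.rank] using hPr
  have hsup := Submodule.finrank_sup_add_finrank_inf_eq
    (LinearMap.range (mulVecLin Pr)) (LinearMap.ker T)
  have hsuple : Module.finrank ℝ
      ((LinearMap.range (mulVecLin Pr)) ⊔ (LinearMap.ker T) : Submodule ℝ (Fin n → ℝ)) ≤ n := by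
    refine le_trans (Submodule.finrank_le _) ?_
    simp [Module.finrank_fintype_fun_eq_card]
  have hinf : 0 < Module.finrank ℝ
      ((LinearMap.range (mulVecLin Pr)) ⊓ (LinearMap.ker T) : Submodule ℝ (Fin n → ℝ)) := by
    omega
  have hnebot : ((LinearMap.range (mulVecLin Pr)) ⊓ (LinearMap.ker T)
      : Submodule ℝ (Fin n → ℝ)) ≠ ⊥ := by
    intro h
    rw [h, finrank_bot] at hinf
    exact lt_irrefl _ hinf
  obtain ⟨x, hxmem, hxne⟩ := (Submodule.ne_bot_iff _).mp hnebot
  obtain ⟨y, hy⟩ := hxmem.1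
  rw [mulVecLin_apply] at hy
  have hxker := hxmem.2
  -- w-coordinates vanish on large eigenvalues
  have hw : ∀ i, c ≤ hS.eigenvalues i → (star (Uh S hS) *ᵥ x) i = 0 := by
    intro i hi
    have h0 : T x = 0 := hxker
    have := congrFun h0 ⟨i, hi⟩
    simpa [T, mulVecLin_apply] using this
  -- x is nonzero, hence has positive norm
  have hxx_pos : 0 < x ⬝ᵥ x := by
    rcases lt_or_eq_of_le (Finset.sum_nonneg fun i _ => mul_self_nonneg (x i)
      : (0:ℝ) ≤ x ⬝ᵥ x) with h | h
    · exact h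
    · exact absurd (dotProduct_self_eq_zero.mp h.symm) hxne
  -- strict upper bound from the spectral decomposition
  have hup : x ⬝ᵥ (S *ᵥ x) < c * (x ⬝ᵥ x) := quad_lt S hS c x (ne_of_gt hxx_pos) hw
  -- lower bound from membership in the column space of Pr
  set u : Fin K → ℝ := Prᵀ *ᵥ x with hu
  have exx : x ⬝ᵥ x = y ⬝ᵥ ((Prᵀ * Pr) *ᵥ y) := by
    rw [← hy, mulVec_dot, mulVec_mulVec]
  have eq_u : u = (Prᵀ * Pr) *ᵥ y := by
    rw [hu, ← hy, mulVec_mulVec]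
  have t1 : kthEig (Prᵀ * Pr) hGr K * (x ⬝ᵥ x) ≤ u ⬝ᵥ u := by
    have h := normsq_mulVec_ge (Prᵀ * Pr) hGr (kthEig (Prᵀ * Pr) hGr K) hlr_le hGr_nonneg y
    rw [← exx, ← eq_u] at h
    exact h
  have t2 : kthEig (∑ l, B l * (B l)ᵀ) hSB K * (u ⬝ᵥ u)
      ≤ ∑ l, ((B l)ᵀ *ᵥ u) ⬝ᵥ ((B l)ᵀ *ᵥ u) := by
    have h := quad_ge (∑ l, B l * (B l)ᵀ) hSB _ hlB_le u
    have eq2 : u ⬝ᵥ ((∑ l, B l * (B l)ᵀ) *ᵥ u)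
        = ∑ l, ((B l)ᵀ *ᵥ u) ⬝ᵥ ((B l)ᵀ *ᵥ u) := by
      rw [sum_mulVec', dot_sum']
      refine Finset.sum_congr rfl fun l _ => ?_
      rw [← mulVec_mulVec, dotProduct_comm, mulVec_dot]
    rw [eq2] at h
    exact h
  have t3 : ∀ l, kthEig (Pcᵀ * Pc) hGc K * (((B l)ᵀ *ᵥ u) ⬝ᵥ ((B l)ᵀ *ᵥ u))
      ≤ (Pc *ᵥ ((B l)ᵀ *ᵥ u)) ⬝ᵥ (Pc *ᵥ ((B l)ᵀ *ᵥ u)) := by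
    intro l
    have h := quad_ge (Pcᵀ * Pc) hGc _ hlc_le ((B l)ᵀ *ᵥ u)
    have eq3 : (Pc *ᵥ ((B l)ᵀ *ᵥ u)) ⬝ᵥ (Pc *ᵥ ((B l)ᵀ *ᵥ u))
        = ((B l)ᵀ *ᵥ u) ⬝ᵥ ((Pcᵀ * Pc) *ᵥ ((B l)ᵀ *ᵥ u)) := by
      rw [mulVec_dot, mulVec_mulVec, mulVec_mulVec]
    rw [← eq3] at h
    exact h
  have eqS : x ⬝ᵥ (S *ᵥ x)
      = ρ ^ 2 * ∑ l, (Pc *ᵥ ((B l)ᵀ *ᵥ u)) ⬝ᵥ (Pc *ᵥ ((B l)ᵀ *ᵥ u)) := by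
    rw [hSdef, sum_mulVec', dot_sum', Finset.mul_sum]
    refine Finset.sum_congr rfl fun l _ => ?_
    rw [← mulVec_mulVec, dotProduct_comm, mulVec_dot]
    rw [transpose_smul, smul_mulVec]
    rw [transpose_mul, transpose_mul, transpose_transpose]
    rw [← mulVec_mulVec, ← mulVec_mulVec]
    simp only [smul_dotProduct, dotProduct_smul, smul_eq_mul, hu]
    ring
  -- assemble the chain of inequalities
  have hchain : c * (x ⬝ᵥ x) ≤ x ⬝ᵥ (S *ᵥ x) := by
    have hnn1 : 0 ≤ ρ ^ 2 * kthEig (Pcᵀ * Pc) hGc K * kthEig (∑ l, B l * (B l)ᵀ) hSB K := by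
      have := sq_nonneg ρ
      positivity
    have hnn2 : 0 ≤ ρ ^ 2 * kthEig (Pcᵀ * Pc) hGc K := by positivity
    calc c * (x ⬝ᵥ x)
        = (ρ ^ 2 * kthEig (Pcᵀ * Pc) hGc K * kthEig (∑ l, B l * (B l)ᵀ) hSB K)
            * (kthEig (Prᵀ * Pr) hGr K * (x ⬝ᵥ x)) := by rw [hc]; ring
      _ ≤ (ρ ^ 2 * kthEig (Pcᵀ * Pc) hGc K * kthEig (∑ l, B l * (B l)ᵀ) hSB K) * (u ⬝ᵥ u) :=
          mul_le_mul_of_nonneg_left t1 hnn1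
      _ = (ρ ^ 2 * kthEig (Pcᵀ * Pc) hGc K)
            * (kthEig (∑ l, B l * (B l)ᵀ) hSB K * (u ⬝ᵥ u)) := by ring
      _ ≤ (ρ ^ 2 * kthEig (Pcᵀ * Pc) hGc K)
            * (∑ l, ((B l)ᵀ *ᵥ u) ⬝ᵥ ((B l)ᵀ *ᵥ u)) := mul_le_mul_of_nonneg_left t2 hnn2
      _ = ρ ^ 2 * (kthEig (Pcᵀ * Pc) hGc K
            * ∑ l, ((B l)ᵀ *ᵥ u) ⬝ᵥ ((B l)ᵀ *ᵥ u)) := by ring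
      _ ≤ ρ ^ 2 * (∑ l, (Pc *ᵥ ((B l)ᵀ *ᵥ u)) ⬝ᵥ (Pc *ᵥ ((B l)ᵀ *ᵥ u))) := by
          refine mul_le_mul_of_nonneg_left ?_ (sq_nonneg ρ)
          rw [Finset.mul_sum]
          exact Finset.sum_le_sum fun l _ => t3 l
      _ = x ⬝ᵥ (S *ᵥ x) := eqS.symm
  linarith
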